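/- Let γ ∈ Δ and let i be the unique index with 1 ≤ i ≤ m such that τ_i ≤ γ ≤ σ_i. Then x(γ) lies in the left S-submodule of ℛ generated by the monomials x(τ_j) with j ≥ i. -/

import Mathlib

open scoped Classical

noncomputable section

namespace SU

/-- The closed real cone spanned by the vectors `v j`, `j ∈ F`. -/
def realCone {n d : ℕ} (v : Fin d → Fin n → ℤ) (F : Finset (Fin d)) : Set (Fin n → ℝ) :=
  {x | ∃ c : Fin d → ℝ, (∀ j, 0 ≤ c j) ∧ (∀ j, j ∉ F → c j = 0) ∧
    x = ∑ j, c j • fun i => (v j i : ℝ)}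

/-- A complete nonsingular fan in `N = ℤ^n`, recorded combinatorially.  Since the
cones of a nonsingular fan are simplicial, every cone is determined by the set of
its edges; `isCone F` says that the primitive vectors `v j`, `j ∈ F`, span a cone
of the fan `Δ`.  Faces correspond to subsets, and the dimension of a cone is the
cardinality of its edge set. -/
structure Fan (n d : ℕ) where
  /-- the primitive generators of the `d` edges (1-dimensional cones) of the fan -/
  v : Fin d → Fin n → ℤ
  v_inj : Function.Injective v
  /-- `isCone F` : the `v j`, `j ∈ F`, span a cone of the fan -/
  isCone : Finset (Fin d) → Prop
  isCone_empty : isCone ∅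
  isCone_singleton : ∀ j, isCone {j}
  /-- the fan is closed under taking faces -/
  isCone_mono : ∀ {F G}, isCone F → G ⊆ F → isCone G
  /-- any two cones meet along a common face -/
  isCone_inter : ∀ {F G}, isCone F → isCone G → isCone (F ∩ G)
  realCone_inter : ∀ {F G}, isCone F → isCone G →
    realCone v F ∩ realCone v G = realCone v (F ∩ G)
  /-- the fan is complete : the union of its cones is all of `N ⊗ ℝ` -/
  complete : ∀ x : Fin n → ℝ, ∃ F, isCone F ∧ x ∈ realCone v F
  /-- nonsingularity : the generators of each cone form part of a `ℤ`-basis of `N` -/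
  unimodular : ∀ {F}, isCone F → ∃ (b : Module.Basis (Fin n) ℤ (Fin n → ℤ))
    (ι : Fin d → Fin n), Set.InjOn ι ↑F ∧ ∀ j ∈ F, b (ι j) = v j

/-- An enumeration `σ 0, …, σ (m-1)` of the `n`-dimensional cones of the fan. -/
structure MaxOrder {n d : ℕ} (Δ : Fan n d) (m : ℕ) where
  σ : Fin m → Finset (Fin d)
  isCone_σ : ∀ i, Δ.isCone (σ i)
  card_σ : ∀ i, (σ i).card = n
  σ_inj : Function.Injective σ
  σ_surj : ∀ F, Δ.isCone F → F.card = n → ∃ i, σ i = F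

/-- `τ i` : the intersection of `σ i` with those cones `σ k`, `k > i`, with
`dim (σ i ∩ σ k) = n - 1`. -/
def MaxOrder.tau {n d m : ℕ} {Δ : Fan n d} (o : MaxOrder Δ m) (i : Fin m) :
    Finset (Fin d) :=
  (o.σ i).filter fun j => ∀ k, i < k → ((o.σ i) ∩ (o.σ k)).card = n - 1 → j ∈ o.σ k

/-- Property (*) : `τ i` a face of `σ j` implies `i ≤ j`. -/
def MaxOrder.Star {n d m : ℕ} {Δ : Fan n d} (o : MaxOrder Δ m) : Prop :=
  ∀ i j, o.tau i ⊆ o.σ j → i ≤ j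

/-- the set `{1, …, n} ⊆ {1, …, d}` of the first `n` edges -/
def firstn {n d : ℕ} (hnd : n ≤ d) : Finset (Fin d) :=
  Finset.univ.map ⟨Fin.castLE hnd, Fin.castLE_injective hnd⟩


section Geometry
variable {n d : ℕ}


/-- extension of an integer linear functional to `ℝ^n` -/
def ext (f : (Fin n → ℤ) →ₗ[ℤ] ℤ) (x : Fin n → ℝ) : ℝ :=
  ∑ t, x t * (f (Pi.single t 1) : ℝ)

lemma ext_int (f : (Fin n → ℤ) →ₗ[ℤ] ℤ) (y : Fin n → ℤ) :
    ext f (fun i => (y i : ℝ)) = (f y : ℝ) := by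
  have hy : y = ∑ t, Pi.single t (y t) := by
    exact (Finset.univ_sum_single y).symm
  have : f y = ∑ t, y t * f (Pi.single t 1) := by
    conv_lhs => rw [hy]
    rw [map_sum]
    refine Finset.sum_congr rfl fun t _ => ?_
    have : Pi.single t (y t) = y t • (Pi.single t 1 : Fin n → ℤ) := by
      funext j
      by_cases h : t = j <;> simp [Pi.single_apply, h]
    rw [this, map_smul, smul_eq_mul]
  rw [this, ext]
  push_cast
  ring_nf

lemma ext_smul (f : (Fin n → ℤ) →ₗ[ℤ] ℤ) (c : ℝ) (x : Fin n → ℝ) :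
    ext f (c • x) = c * ext f x := by
  simp only [ext, Pi.smul_apply, smul_eq_mul, Finset.mul_sum]
  exact Finset.sum_congr rfl fun t _ => by ring

lemma ext_add (f : (Fin n → ℤ) →ₗ[ℤ] ℤ) (x y : Fin n → ℝ) :
    ext f (x + y) = ext f x + ext f y := by
  simp only [ext, Pi.add_apply, add_mul, Finset.sum_add_distrib]

lemma ext_sum (f : (Fin n → ℤ) →ₗ[ℤ] ℤ) {α : Type*} (s : Finset α) (g : α → Fin n → ℝ) :
    ext f (∑ a ∈ s, g a) = ∑ a ∈ s, ext f (g a) := by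
  classical
  induction s using Finset.induction with
  | empty => simp [ext]
  | insert _ _ ha ih => rw [Finset.sum_insert ha, ext_add, ih, Finset.sum_insert ha]

lemma ext_apply_mem (f : (Fin n → ℤ) →ₗ[ℤ] ℤ) {v : Fin d → Fin n → ℤ} {F : Finset (Fin d)}
    {x : Fin n → ℝ} (hx : x ∈ realCone v F) :
    ∃ c : Fin d → ℝ, (∀ j, 0 ≤ c j) ∧ (∀ j, j ∉ F → c j = 0) ∧
      ext f x = ∑ j, c j * (f (v j) : ℝ) := by
  obtain ⟨c, hc0, hcs, rfl⟩ := hx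
  refine ⟨c, hc0, hcs, ?_⟩
  rw [ext_sum]
  refine Finset.sum_congr rfl fun j _ => ?_
  rw [ext_smul, ext_int]

/-- the canonical interior-ish point of a cone -/
def pt (v : Fin d → Fin n → ℤ) (F : Finset (Fin d)) : Fin n → ℝ :=
  ∑ j ∈ F, fun i => (v j i : ℝ)

lemma pt_mem (v : Fin d → Fin n → ℤ) (F : Finset (Fin d)) : pt v F ∈ realCone v F := by
  refine ⟨fun j => if j ∈ F then 1 else 0, fun j => by positivity, fun j hj => by simp [hj], ?_⟩
  rw [pt]
  simp only [ite_smul, one_smul, zero_smul, Finset.sum_ite_mem, Finset.univ_inter]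

lemma ext_pt (f : (Fin n → ℤ) →ₗ[ℤ] ℤ) (v : Fin d → Fin n → ℤ) (F : Finset (Fin d)) :
    ext f (pt v F) = ∑ j ∈ F, (f (v j) : ℝ) := by
  rw [pt, ext_sum]
  exact Finset.sum_congr rfl fun j _ => ext_int f (v j)


lemma ext_affine (f : (Fin n → ℤ) →ₗ[ℤ] ℤ) (x w : Fin n → ℝ) (t : ℝ) :
    ext f (x + t • w) = ext f x + t * ext f w := by
  rw [ext_add, ext_smul]

lemma ext_expand (b : Module.Basis (Fin n) ℤ (Fin n → ℤ)) (x : Fin n → ℝ) (s : Fin n) :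
    x s = ∑ i', ext (b.coord i') x * ((b i' s : ℤ) : ℝ) := by
  have key : ∀ t : Fin n, ∑ i', ((b.coord i' (Pi.single t 1) : ℤ) : ℝ) * ((b i' s : ℤ) : ℝ)
      = (((Pi.single t 1 : Fin n → ℤ) s : ℤ) : ℝ) := by
    intro t
    have h := b.sum_repr (Pi.single t (1 : ℤ))
    have h2 : ((∑ i', b.repr (Pi.single t (1:ℤ)) i' • b i') s : ℤ) = ((Pi.single t 1 : Fin n → ℤ) s) := by
      rw [h]
    rw [← h2, Finset.sum_apply]
    push_cast
    refine Finset.sum_congr rfl fun i' _ => ?_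
    simp [Module.Basis.coord_apply]
  calc x s = ∑ i', ∑ t, x t * (((b.coord i' (Pi.single t 1) : ℤ):ℝ) * ((b i' s : ℤ):ℝ)) := by
        rw [Finset.sum_comm]
        have : ∀ t, ∑ i', x t * (((b.coord i' (Pi.single t 1) : ℤ):ℝ) * ((b i' s : ℤ):ℝ))
            = x t * (((Pi.single t 1 : Fin n → ℤ) s : ℤ) : ℝ) := fun t => by
          rw [← Finset.mul_sum, key]
        rw [Finset.sum_congr rfl fun t _ => this t]
        simp [Pi.single_apply]
    _ = ∑ i', ext (b.coord i') x * ((b i' s : ℤ) : ℝ) := by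
        refine Finset.sum_congr rfl fun i' _ => ?_
        rw [ext, Finset.sum_mul]
        exact Finset.sum_congr rfl fun t _ => by ring

lemma coord_v {v : Fin d → Fin n → ℤ} {F : Finset (Fin d)}
    (b : Module.Basis (Fin n) ℤ (Fin n → ℤ)) (ι : Fin d → Fin n)
    (hι : Set.InjOn ι ↑F) (hb : ∀ j ∈ F, b (ι j) = v j) {j j0 : Fin d}
    (hj : j ∈ F) (hj0 : j0 ∈ F) :
    (b.coord (ι j0)) (v j) = if j = j0 then 1 else 0 := by
  by_cases h : j = j0
  · subst h; simp [← hb j hj, Module.Basis.coord_apply, Module.Basis.repr_self]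
  · have hne : ι j ≠ ι j0 := fun he => h (hι hj hj0 he)
    simp [← hb j hj, Module.Basis.coord_apply, Module.Basis.repr_self, Finsupp.single_apply, hne, h]

lemma mem_realCone_iff {v : Fin d → Fin n → ℤ} {F : Finset (Fin d)}
    (b : Module.Basis (Fin n) ℤ (Fin n → ℤ)) (ι : Fin d → Fin n)
    (hι : Set.InjOn ι ↑F) (hb : ∀ j ∈ F, b (ι j) = v j) (x : Fin n → ℝ) :
    x ∈ realCone v F ↔ (∀ j ∈ F, 0 ≤ ext (b.coord (ι j)) x) ∧
      (∀ i', i' ∉ F.image ι → ext (b.coord i') x = 0) := by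
  constructor
  · intro hx
    constructor
    · intro j0 hj0
      obtain ⟨c, hc0, hcs, hval⟩ := ext_apply_mem (b.coord (ι j0)) hx
      rw [hval, Finset.sum_eq_single j0]
      · by_cases hj0F : j0 ∈ F
        · rw [coord_v b ι hι hb hj0F hj0F]; simp; exact hc0 j0
        · rw [hcs j0 hj0F, zero_mul]
      · intro j _ hne
        by_cases hjF : j ∈ F
        · rw [coord_v b ι hι hb hjF hj0]; simp [hne]
        · rw [hcs j hjF, zero_mul]
      · intro h; exact absurd (Finset.mem_univ j0) h
    · intro i' hi'
      obtain ⟨c, hc0, hcs, hval⟩ := ext_apply_mem (b.coord i') hx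
      rw [hval]
      refine Finset.sum_eq_zero fun j _ => ?_
      by_cases hjF : j ∈ F
      · have hne : ι j ≠ i' := fun he => hi' (Finset.mem_image.mpr ⟨j, hjF, he⟩)
        rw [← hb j hjF, Module.Basis.coord_apply, Module.Basis.repr_self]
        simp [Finsupp.single_apply, hne]
      · rw [hcs j hjF, zero_mul]
  · rintro ⟨h1, h2⟩
    refine ⟨fun j => if j ∈ F then ext (b.coord (ι j)) x else 0,
      fun j => by by_cases hj : j ∈ F <;> simp [hj]; exact h1 j hj,
      fun j hj => by simp [hj], ?_⟩
    funext s
    rw [Finset.sum_apply]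
    have hrhs : ∀ j : Fin d, ((if j ∈ F then ext (b.coord (ι j)) x else 0) • fun i => ((v j i : ℤ):ℝ)) s
        = if j ∈ F then ext (b.coord (ι j)) x * ((v j s : ℤ):ℝ) else 0 := by
      intro j; by_cases hj : j ∈ F <;> simp [hj]
    rw [Finset.sum_congr rfl fun j _ => hrhs j, Finset.sum_ite_mem, Finset.univ_inter]
    rw [ext_expand b x s]
    rw [← Finset.sum_subset (Finset.subset_univ (F.image ι))
      (fun i' _ hi' => by rw [h2 i' hi', zero_mul])]
    rw [Finset.sum_image (fun a ha b' hb' h => hι ha hb' h)]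
    refine Finset.sum_congr rfl fun j hj => ?_
    rw [hb j hj]

lemma cone_card_le (Δ : Fan n d) {F : Finset (Fin d)} (hF : Δ.isCone F) : F.card ≤ n := by
  obtain ⟨b, ι, hι, hb⟩ := Δ.unimodular hF
  have := Finset.card_le_card_of_injOn ι (fun a _ => Finset.mem_univ (ι a)) hι
  simpa using this

lemma subset_of_pt_mem (Δ : Fan n d) {F G : Finset (Fin d)} (hF : Δ.isCone F) (hG : Δ.isCone G)
    (hx : pt Δ.v F ∈ realCone Δ.v G) : F ⊆ G := by
  obtain ⟨b, ι, hι, hb⟩ := Δ.unimodular hF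
  have hmem : pt Δ.v F ∈ realCone Δ.v (F ∩ G) := by
    rw [← Δ.realCone_inter hF hG]; exact ⟨pt_mem _ _, hx⟩
  intro j0 hj0
  by_contra hj0G
  have hj0FG : j0 ∉ F ∩ G := by simp [hj0G]
  obtain ⟨c, hc0, hcs, hval⟩ := ext_apply_mem (b.coord (ι j0)) hmem
  have hL : ext (b.coord (ι j0)) (pt Δ.v F) = 1 := by
    rw [ext_pt, Finset.sum_eq_single j0]
    · rw [coord_v b ι hι hb hj0 hj0]; simp
    · intro j hj hne; rw [coord_v b ι hι hb hj hj0]; simp [hne]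
    · intro h; exact absurd hj0 h
  have hR : ∑ j, c j * ((b.coord (ι j0)) (Δ.v j) : ℝ) = 0 := by
    refine Finset.sum_eq_zero fun j _ => ?_
    by_cases hjFG : j ∈ F ∩ G
    · have hjF : j ∈ F := (Finset.mem_inter.mp hjFG).1
      have hne : j ≠ j0 := fun h => hj0FG (h ▸ hjFG)
      rw [coord_v b ι hι hb hjF hj0]; simp [hne]
    · rw [hcs j hjFG, zero_mul]
  rw [hval, hR] at hL
  norm_num at hL

lemma pigeon (Δ : Fan n d) (x0 w : Fin n → ℝ) :
    ∃ G, Δ.isCone G ∧ ∀ ε : ℝ, 0 < ε →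
      ∃ t : ℝ, 0 < t ∧ t < ε ∧ x0 + t • w ∈ realCone Δ.v G := by
  have hch : ∀ q : ℕ, ∃ F, Δ.isCone F ∧ x0 + (1/((q:ℝ)+1)) • w ∈ realCone Δ.v F :=
    fun q => Δ.complete _
  choose f hf1 hf2 using hch
  obtain ⟨G, hG⟩ := Finite.exists_infinite_fiber f
  have hGset : (f ⁻¹' {G}).Infinite := Set.infinite_coe_iff.mp hG
  obtain ⟨q0, hq0⟩ := hGset.nonempty
  have hfq0 : f q0 = G := hq0
  refine ⟨G, hfq0 ▸ hf1 q0, fun ε hε => ?_⟩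
  obtain ⟨q, hqf, hq⟩ := hGset.exists_gt ⌈1/ε⌉₊
  have hfq : f q = G := hqf
  refine ⟨1/((q:ℝ)+1), by positivity, ?_, hfq ▸ hf2 q⟩
  have h1 : (1:ℝ)/ε < (q:ℝ)+1 := by
    calc (1:ℝ)/ε ≤ (⌈1/ε⌉₊ : ℝ) := Nat.le_ceil _
    _ < (q:ℝ)+1 := by
        have : (⌈1/ε⌉₊ : ℝ) < (q:ℝ) := by exact_mod_cast hq
        linarith
  rw [div_lt_iff₀ (by positivity)]
  have := (div_lt_iff₀ hε).mp h1
  linarith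

lemma mem_of_approx (Δ : Fan n d) {G : Finset (Fin d)} (hG : Δ.isCone G) (x0 w : Fin n → ℝ)
    (h : ∀ ε : ℝ, 0 < ε → ∃ t : ℝ, 0 < t ∧ t < ε ∧ x0 + t • w ∈ realCone Δ.v G) :
    x0 ∈ realCone Δ.v G := by
  obtain ⟨b, ι, hι, hb⟩ := Δ.unimodular hG
  rw [mem_realCone_iff b ι hι hb]
  constructor
  · intro j hj
    by_contra hneg
    push_neg at hneg
    set A := ext (b.coord (ι j)) x0 with hA
    set B := ext (b.coord (ι j)) w with hB
    obtain ⟨t, ht0, htε, hmem⟩ := h (-A / (|B| + 1))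
      (div_pos (by linarith) (by positivity))
    have h0 : 0 ≤ A + t * B := by
      have := ((mem_realCone_iff b ι hι hb _).mp hmem).1 j hj
      rwa [ext_affine] at this
    have h1 : t * B ≤ t * |B| := mul_le_mul_of_nonneg_left (le_abs_self B) ht0.le
    have h2 : t * |B| ≤ t * (|B| + 1) := by nlinarith
    have h3 : t * (|B| + 1) < -A := by
      have := (lt_div_iff₀ (show (0:ℝ) < |B| + 1 by positivity)).mp htε
      linarith
    linarith
  · intro i' hi'
    obtain ⟨t1, ht10, _, hm1⟩ := h 1 one_pos
    obtain ⟨t2, ht20, ht2lt, hm2⟩ := h t1 ht10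
    have e1 := ((mem_realCone_iff b ι hι hb _).mp hm1).2 i' hi'
    have e2 := ((mem_realCone_iff b ι hι hb _).mp hm2).2 i' hi'
    rw [ext_affine] at e1 e2
    have hmul : (t1 - t2) * ext (b.coord i') w = 0 := by linear_combination e1 - e2
    have hBz : ext (b.coord i') w = 0 := by
      rcases mul_eq_zero.mp hmul with h' | h'
      · exfalso
        have hne : t1 - t2 ≠ 0 := by
          intro hz
          have : t1 = t2 := by linarith
          linarith
        exact hne h'
      · exact h'
    rw [hBz, mul_zero] at e1
    linarith

lemma grow (Δ : Fan n d) {F : Finset (Fin d)} (hF : Δ.isCone F) (hlt : F.card < n) :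
    ∃ G, Δ.isCone G ∧ F ⊂ G := by
  obtain ⟨b, ι, hι, hb⟩ := Δ.unimodular hF
  obtain ⟨i', hi'⟩ : ∃ i', i' ∉ F.image ι := by
    by_contra hcon
    push_neg at hcon
    have hsub : (Finset.univ : Finset (Fin n)) ⊆ F.image ι := fun i' _ => hcon i'
    have := Finset.card_le_card hsub
    have h2 := Finset.card_image_le (s := F) (f := ι)
    simp at this
    omega
  set w : Fin n → ℝ := fun s => ((b i' s : ℤ) : ℝ) with hw
  obtain ⟨G, hGc, hGap⟩ := pigeon Δ (pt Δ.v F) w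
  have hx0 : pt Δ.v F ∈ realCone Δ.v G := mem_of_approx Δ hGc _ _ hGap
  have hFG : F ⊆ G := subset_of_pt_mem Δ hF hGc hx0
  refine ⟨G, hGc, hFG, ?_⟩
  intro hGF
  obtain ⟨t, ht0, _, hmem⟩ := hGap 1 one_pos
  obtain ⟨c, hc0, hcs, hval⟩ := ext_apply_mem (b.coord i') hmem
  have hL : ext (b.coord i') (pt Δ.v F + t • w) = t := by
    rw [ext_affine]
    have h1 : ext (b.coord i') (pt Δ.v F) = 0 := by
      rw [ext_pt]
      refine Finset.sum_eq_zero fun j hj => ?_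
      have hne : ι j ≠ i' := fun he => hi' (Finset.mem_image.mpr ⟨j, hj, he⟩)
      rw [← hb j hj, Module.Basis.coord_apply, Module.Basis.repr_self]
      simp [Finsupp.single_apply, hne]
    have h2 : ext (b.coord i') w = 1 := by
      rw [hw, ext_int]
      simp [Module.Basis.coord_apply, Module.Basis.repr_self]
    rw [h1, h2]; ring
  have hR : ext (b.coord i') (pt Δ.v F + t • w) = 0 := by
    rw [hval]
    refine Finset.sum_eq_zero fun j _ => ?_
    by_cases hj : j ∈ G
    · have hjF : j ∈ F := hGF hj
      have hne : ι j ≠ i' := fun he => hi' (Finset.mem_image.mpr ⟨j, hjF, he⟩)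
      rw [← hb j hjF, Module.Basis.coord_apply, Module.Basis.repr_self]
      simp [Finsupp.single_apply, hne]
    · rw [hcs j hj, zero_mul]
  rw [hL] at hR
  linarith

lemma exists_max (Δ : Fan n d) :
    ∀ k : ℕ, ∀ F, Δ.isCone F → n - F.card ≤ k → ∃ G, Δ.isCone G ∧ F ⊆ G ∧ G.card = n := by
  intro k
  induction k with
  | zero =>
    intro F hF h0
    have hle := cone_card_le Δ hF
    exact ⟨F, hF, subset_rfl, by omega⟩
  | succ k ih =>
    intro F hF hk
    by_cases hc : F.card = n
    · exact ⟨F, hF, subset_rfl, hc⟩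
    · have hle := cone_card_le Δ hF
      have hlt : F.card < n := by omega
      obtain ⟨G, hGc, hFG⟩ := grow Δ hF hlt
      have hcard := Finset.card_lt_card hFG
      obtain ⟨H, h1, h2, h3⟩ := ih G hGc (by have := cone_card_le Δ hGc; omega)
      exact ⟨H, h1, subset_trans hFG.subset h2, h3⟩

end Geometry

section Combinatorics
variable {n d m : ℕ} {Δ : Fan n d}

lemma exists_sigma (o : MaxOrder Δ m) {δ : Finset (Fin d)} (hδ : Δ.isCone δ) :
    ∃ l, δ ⊆ o.σ l := by
  obtain ⟨G, hGc, hsub, hcard⟩ := exists_max Δ (n - δ.card) δ hδ le_rfl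
  obtain ⟨l, hl⟩ := o.σ_surj G hGc hcard
  exact ⟨l, hl ▸ hsub⟩

lemma facet_other (o : MaxOrder Δ m) (i : Fin m) {j0 : Fin d} (hj0 : j0 ∈ o.σ i) :
    ∃ l, l ≠ i ∧ (o.σ i).erase j0 ⊆ o.σ l := by
  have hσc := o.isCone_σ i
  obtain ⟨b, ι, hι, hb⟩ := Δ.unimodular hσc
  have hFc : Δ.isCone ((o.σ i).erase j0) := Δ.isCone_mono hσc (Finset.erase_subset _ _)
  set w : Fin n → ℝ := (-1 : ℝ) • fun s => ((b (ι j0) s : ℤ) : ℝ) with hw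
  obtain ⟨G, hGc, hGap⟩ := pigeon Δ (pt Δ.v ((o.σ i).erase j0)) w
  have hx0 : pt Δ.v ((o.σ i).erase j0) ∈ realCone Δ.v G := mem_of_approx Δ hGc _ _ hGap
  have hFG : (o.σ i).erase j0 ⊆ G := subset_of_pt_mem Δ hFc hGc hx0
  -- find an edge of G outside σ i
  obtain ⟨t, ht0, _, hmem⟩ := hGap 1 one_pos
  obtain ⟨c, hc0, hcs, hval⟩ := ext_apply_mem (b.coord (ι j0)) hmem
  have hL : ext (b.coord (ι j0)) (pt Δ.v ((o.σ i).erase j0) + t • w) = -t := by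
    rw [ext_affine]
    have h1 : ext (b.coord (ι j0)) (pt Δ.v ((o.σ i).erase j0)) = 0 := by
      rw [ext_pt]
      refine Finset.sum_eq_zero fun j hj => ?_
      have hjσ : j ∈ o.σ i := Finset.mem_of_mem_erase hj
      have hne : j ≠ j0 := Finset.ne_of_mem_erase hj
      rw [coord_v b ι hι hb hjσ hj0]
      simp [hne]
    have h2 : ext (b.coord (ι j0)) w = -1 := by
      rw [hw, ext_smul, ext_int]
      simp [Module.Basis.coord_apply, Module.Basis.repr_self]
    rw [h1, h2]; ring
  have hex : ∃ e ∈ G, (b.coord (ι j0)) (Δ.v e) < 0 := by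
    by_contra hcon
    push_neg at hcon
    have hge : 0 ≤ ∑ j, c j * (((b.coord (ι j0)) (Δ.v j) : ℤ) : ℝ) := by
      refine Finset.sum_nonneg fun j _ => ?_
      by_cases hj : j ∈ G
      · have := hcon j hj
        have hc := hc0 j
        have : (0:ℝ) ≤ (((b.coord (ι j0)) (Δ.v j) : ℤ) : ℝ) := by exact_mod_cast this
        positivity
      · rw [hcs j hj, zero_mul]
    rw [hval] at hL
    rw [hL] at hge
    linarith
  obtain ⟨e, heG, helt⟩ := hex
  have heσ : e ∉ o.σ i := by
    intro heσ
    rw [coord_v b ι hι hb heσ hj0] at helt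
    by_cases h : e = j0 <;> simp [h] at helt
  obtain ⟨H, hHc, hGH, hHcard⟩ := exists_max Δ (n - G.card) G hGc le_rfl
  obtain ⟨l, hl⟩ := o.σ_surj H hHc hHcard
  refine ⟨l, ?_, fun j hj => hl ▸ hGH (hFG hj)⟩
  intro hli
  exact heσ (by rw [← hli, hl]; exact hGH heG)

lemma interval (o : MaxOrder Δ m) {δ : Finset (Fin d)}
    (hδ : Δ.isCone δ) : ∃ i, o.tau i ⊆ δ ∧ δ ⊆ o.σ i := by
  classical
  have hne : (Finset.univ.filter fun l => δ ⊆ o.σ l).Nonempty := by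
    obtain ⟨l, hl⟩ := exists_sigma o hδ
    exact ⟨l, by simp [hl]⟩
  set i := (Finset.univ.filter fun l => δ ⊆ o.σ l).min' hne with hidef
  have himem := (Finset.univ.filter fun l => δ ⊆ o.σ l).min'_mem hne
  rw [Finset.mem_filter] at himem
  refine ⟨i, ?_, himem.2⟩
  intro j hj
  rw [MaxOrder.tau, Finset.mem_filter] at hj
  obtain ⟨hjσ, hjall⟩ := hj
  by_contra hjδ
  have hδer : δ ⊆ (o.σ i).erase j := fun a ha =>
    Finset.mem_erase.mpr ⟨fun h => hjδ (h ▸ ha), himem.2 ha⟩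
  obtain ⟨l, hli, hlsub⟩ := facet_other o i hjσ
  have hjl : j ∉ o.σ l := by
    intro hjl
    have hsub : o.σ i ⊆ o.σ l := by
      intro a ha
      by_cases h : a = j
      · exact h ▸ hjl
      · exact hlsub (Finset.mem_erase.mpr ⟨h, ha⟩)
    have : o.σ i = o.σ l :=
      Finset.eq_of_subset_of_card_le hsub (by rw [o.card_σ, o.card_σ])
    exact hli (o.σ_inj this.symm)
  have hcardil : (o.σ i ∩ o.σ l).card = n - 1 := by
    have h1 : o.σ i ∩ o.σ l = (o.σ i).erase j := by
      apply Finset.Subset.antisymm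
      · intro a ha
        rw [Finset.mem_inter] at ha
        exact Finset.mem_erase.mpr ⟨fun h => hjl (h ▸ ha.2), ha.1⟩
      · intro a ha
        exact Finset.mem_inter.mpr ⟨Finset.mem_of_mem_erase ha, hlsub ha⟩
    rw [h1, Finset.card_erase_of_mem hjσ, o.card_σ]
  rcases lt_or_gt_of_ne hli with hlt | hgt
  · -- l < i contradicts minimality
    have hlmem : l ∈ Finset.univ.filter fun l => δ ⊆ o.σ l := by
      simp only [Finset.mem_filter, Finset.mem_univ, true_and]
      exact fun a ha => hlsub (hδer ha)
    have := Finset.min'_le _ l hlmem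
    rw [← hidef] at this
    exact absurd (lt_of_le_of_lt this hlt) (lt_irrefl _)
  · exact hjl (hjall l hgt hcardil)
end Combinatorics
variable {n d : ℕ} (S : Type*) [Ring S]

/-- The polynomial algebra over a (possibly noncommutative) ring `S` in `d`
central, pairwise commuting, variables. -/
abbrev Poly (S : Type*) [Ring S] (d : ℕ) : Type _ := AddMonoidAlgebra S (Fin d →₀ ℕ)

/-- the variable `x j` -/
def X (j : Fin d) : Poly S d := AddMonoidAlgebra.single (Finsupp.single j 1) 1

/-- the scalar `s ∈ S` as a polynomial -/
def Cc (s : S) : Poly S d := AddMonoidAlgebra.single 0 s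

/-- The square-free monomial `∏_{j ∈ F} x j`. -/
def mon (F : Finset (Fin d)) : Poly S d :=
  AddMonoidAlgebra.single (∑ j ∈ F, Finsupp.single j 1) 1

lemma commute_X (j k : Fin d) : Commute (X S j) (X S k) := by
  show X S j * X S k = X S k * X S j
  simp only [X]
  rw [AddMonoidAlgebra.single_mul_single, AddMonoidAlgebra.single_mul_single, add_comm]

lemma commute_one_sub_X_pow (j k : Fin d) (a b : ℕ) :
    Commute ((1 - X S j) ^ a) ((1 - X S k) ^ b) :=
  ((Commute.one_left (1 - X S k)).sub_left
    ((Commute.one_right (X S j)).sub_right (commute_X S j k))).pow_pow a b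

/-- the relation (on the polynomial ring) identifying every member of `gens`
with `0`; the corresponding `RingQuot` is the quotient by the two-sided ideal
generated by `gens`. -/
def relOf (gens : Set (Poly S d)) : Poly S d → Poly S d → Prop :=
  fun p q => p ∈ gens ∧ q = 0

/-- type (i) generators : the monomials `x_{j₁} ⋯ x_{j_k}` (distinct indices)
such that `v_{j₁}, …, v_{j_k}` do not span a cone of `Δ`. -/
def gensCone (Δ : Fan n d) : Set (Poly S d) :=
  {p | ∃ F : Finset (Fin d), ¬ Δ.isCone F ∧ p = mon S F}

/-- type (ii) generators : the elements `y i = ∑_j ⟨u i, v j⟩ x j - r i`. -/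
def gensLin (Δ : Fan n d) (uu : Fin n → ((Fin n → ℤ) →ₗ[ℤ] ℤ)) (r : Fin n → S) :
    Set (Poly S d) :=
  {p | ∃ i : Fin n, p = (∑ j, (uu i (Δ.v j)) • X S j) - Cc S (r i)}

/-- the generators of the ideal `I_S` -/
def gensI (Δ : Fan n d) (uu : Fin n → ((Fin n → ℤ) →ₗ[ℤ] ℤ)) (r : Fin n → S) :
    Set (Poly S d) :=
  gensCone S Δ ∪ gensLin S Δ uu r

/-- the ring `R = S[x₁,…,x_d]/I_S` -/
abbrev RRing (Δ : Fan n d) (uu : Fin n → ((Fin n → ℤ) →ₗ[ℤ] ℤ)) (r : Fin n → S) :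
    Type _ :=
  RingQuot (relOf S (gensI S Δ uu r))

/-- the quotient map `S[x₁,…,x_d] → R` -/
def mkR (Δ : Fan n d) (uu : Fin n → ((Fin n → ℤ) →ₗ[ℤ] ℤ)) (r : Fin n → S) :
    Poly S d →+* RRing S Δ uu r :=
  RingQuot.mkRingHom _

/-- `∏_{j : ⟨u, v j⟩ > 0} (1 - x j) ^ ⟨u, v j⟩` -/
def zPos (Δ : Fan n d) (u : (Fin n → ℤ) →ₗ[ℤ] ℤ) : Poly S d :=
  Finset.univ.noncommProd (fun j => (1 - X S j) ^ (u (Δ.v j)).toNat)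
    (fun j _ k _ _ => commute_one_sub_X_pow S j k _ _)

/-- `∏_{j : ⟨u, v j⟩ < 0} (1 - x j) ^ (-⟨u, v j⟩)` -/
def zNeg (Δ : Fan n d) (u : (Fin n → ℤ) →ₗ[ℤ] ℤ) : Poly S d :=
  Finset.univ.noncommProd (fun j => (1 - X S j) ^ (-(u (Δ.v j))).toNat)
    (fun j _ k _ _ => commute_one_sub_X_pow S j k _ _)

lemma central_commute (ru : Fin n → Sˣ)
    (hcen : ∀ i, (ru i : S) ∈ Subring.center S) (i k : Fin n) :
    Commute (ru i) (ru k) := by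
  show ru i * ru k = ru k * ru i
  exact Units.ext (by simpa using (Subring.mem_center_iff.mp (hcen i) (ru k)).symm)

/-- `r(u) = ∏_i r i ^ a i` for `u = ∑ a i • u i`, the `r i` being invertible. -/
def rOf (ru : Fin n → Sˣ) (hc : ∀ i k, Commute (ru i) (ru k)) (a : Fin n → ℤ) : S :=
  (Finset.univ.noncommProd (fun i => ru i ^ a i)
    (fun i _ k _ _ => (hc i k).zpow_zpow _ _) : Sˣ)

/-- type (ii′) generators : the elements `z(u)` for `u ∈ M` -/
def gensZ (Δ : Fan n d) (uu : Fin n → ((Fin n → ℤ) →ₗ[ℤ] ℤ)) (ru : Fin n → Sˣ)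
    (hc : ∀ i k, Commute (ru i) (ru k)) : Set (Poly S d) :=
  {p | ∃ a : Fin n → ℤ, p = zPos S Δ (∑ i, a i • uu i) -
    Cc S (rOf S ru hc a) * zNeg S Δ (∑ i, a i • uu i)}

/-- the generators of the ideal `𝓘_S` -/
def gensII (Δ : Fan n d) (uu : Fin n → ((Fin n → ℤ) →ₗ[ℤ] ℤ)) (ru : Fin n → Sˣ)
    (hc : ∀ i k, Commute (ru i) (ru k)) : Set (Poly S d) :=
  gensCone S Δ ∪ gensZ S Δ uu ru hc

/-- the ring `ℛ = S[x₁,…,x_d]/𝓘_S` -/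
abbrev RcalRing (Δ : Fan n d) (uu : Fin n → ((Fin n → ℤ) →ₗ[ℤ] ℤ)) (ru : Fin n → Sˣ)
    (hc : ∀ i k, Commute (ru i) (ru k)) : Type _ :=
  RingQuot (relOf S (gensII S Δ uu ru hc))

/-- the quotient map `S[x₁,…,x_d] → ℛ` -/
def mkRcal (Δ : Fan n d) (uu : Fin n → ((Fin n → ℤ) →ₗ[ℤ] ℤ)) (ru : Fin n → Sˣ)
    (hc : ∀ i k, Commute (ru i) (ru k)) : Poly S d →+* RcalRing S Δ uu ru hc :=
  RingQuot.mkRingHom _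


section Algebra

lemma Cc_mul (s t : S) : (Cc S (s * t) : Poly S d) = Cc S s * Cc S t := by
  show AddMonoidAlgebra.single 0 (s*t) = AddMonoidAlgebra.single 0 s * AddMonoidAlgebra.single 0 t
  rw [AddMonoidAlgebra.single_mul_single, zero_add]

lemma Cc_one : (Cc S 1 : Poly S d) = 1 := rfl

lemma Cc_zero : (Cc S 0 : Poly S d) = 0 := by
  show AddMonoidAlgebra.single 0 (0:S) = 0
  exact AddMonoidAlgebra.single_zero 0

lemma Cc_neg (s : S) : (Cc S (-s) : Poly S d) = - Cc S s := by
  show AddMonoidAlgebra.single 0 (-s) = -AddMonoidAlgebra.single 0 s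
  exact AddMonoidAlgebra.single_neg 0 s

lemma single_comm_Cc (a : Fin d →₀ ℕ) (s : S) :
    AddMonoidAlgebra.single a (1:S) * Cc S s = Cc S s * AddMonoidAlgebra.single a 1 := by
  rw [Cc, AddMonoidAlgebra.single_mul_single, AddMonoidAlgebra.single_mul_single]
  rw [add_zero, zero_add, one_mul, mul_one]

lemma single_eq_Cc_mul (a : Fin d →₀ ℕ) (s : S) :
    (AddMonoidAlgebra.single a s : Poly S d) = Cc S s * AddMonoidAlgebra.single a 1 := by
  rw [Cc, AddMonoidAlgebra.single_mul_single, zero_add, mul_one]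

/-- the indicator exponent vector of a finset -/
lemma indicator_apply (F : Finset (Fin d)) (j : Fin d) :
    (∑ k ∈ F, Finsupp.single k (1:ℕ)) j = if j ∈ F then 1 else 0 := by
  classical
  rw [Finset.sum_apply']
  rw [Finset.sum_congr rfl fun k _ => Finsupp.single_apply]
  exact Finset.sum_ite_eq' F j (fun _ => 1)

lemma indicator_support (F : Finset (Fin d)) :
    (∑ k ∈ F, Finsupp.single k (1:ℕ)).support = F := by
  ext j
  rw [Finsupp.mem_support_iff, indicator_apply]
  by_cases hj : j ∈ F <;> simp [hj]

/-- the "constant term" monoid character -/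
def ctg : Multiplicative (Fin d →₀ ℕ) →* S where
  toFun ν := if Multiplicative.toAdd ν = 0 then 1 else 0
  map_one' := by simp
  map_mul' x y := by
    simp only [toAdd_mul]
    rcases (Finsupp.add_eq_zero_iff (Multiplicative.toAdd x) (Multiplicative.toAdd y)) with h
    by_cases hx : Multiplicative.toAdd x = 0 <;> by_cases hy : Multiplicative.toAdd y = 0 <;>
      simp [hx, hy, h]

/-- the constant-term ring homomorphism -/
def ct : Poly S d →+* S :=
  AddMonoidAlgebra.liftNCRingHom (RingHom.id S) (ctg S) (fun x y => by
    show Commute x (ctg S y)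
    show Commute x (if Multiplicative.toAdd y = 0 then 1 else 0)
    split_ifs
    · exact Commute.one_right x
    · exact Commute.zero_right x)

lemma ct_single (a : Fin d →₀ ℕ) (s : S) :
    ct S (AddMonoidAlgebra.single a s) = if a = 0 then s else 0 := by
  rw [ct, AddMonoidAlgebra.liftNCRingHom]
  show AddMonoidAlgebra.liftNC _ _ _ = _
  rw [AddMonoidAlgebra.liftNC_single]
  show s * (if a = 0 then 1 else 0) = _
  by_cases h : a = 0 <;> simp [h]

lemma ct_apply (p : Poly S d) : ct S p = p.coeff 0 := by
  conv_lhs => rw [← AddMonoidAlgebra.sum_coeff_single p]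
  rw [Finsupp.sum, map_sum]
  rw [Finset.sum_congr rfl fun a _ => ct_single S a (p.coeff a)]
  rw [Finset.sum_ite_eq' p.coeff.support 0 (fun a => p.coeff a)]
  by_cases h : (0 : Fin d →₀ ℕ) ∈ p.coeff.support
  · simp [h]
  · simp [h, Finsupp.notMem_support_iff.mp h]

lemma ct_X (j : Fin d) : ct S (X S j) = 0 := by
  rw [X, ct_single]
  have : Finsupp.single j 1 ≠ (0 : Fin d →₀ ℕ) := by
    intro h
    have := Finsupp.single_eq_zero.mp h
    omega
  simp [this]

lemma ct_pow_one_sub_X (j : Fin d) (e : ℕ) : ct S ((1 - X S j) ^ e) = 1 := by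
  rw [map_pow, map_sub, map_one, ct_X, sub_zero, one_pow]

lemma ct_noncommProd (B : Finset (Fin d)) (e : Fin d → ℕ)
    (comm : (↑B : Set (Fin d)).Pairwise (Function.onFun Commute fun j => (1 - X S j) ^ (e j))) :
    ct S (B.noncommProd (fun j => (1 - X S j) ^ (e j)) comm) = 1 := by
  classical
  induction B using Finset.induction with
  | empty => rw [Finset.noncommProd_empty, map_one]
  | @insert a B ha ih =>
    rw [Finset.noncommProd_insert_of_notMem _ _ _ _ ha, map_mul, ct_pow_one_sub_X, one_mul]
    exact ih _

lemma support_one_sub_X (j : Fin d) :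
    ∀ ν ∈ (1 - X S j).coeff.support, ν.support ⊆ {j} := by
  intro ν hν
  have h1 : (1 - X S j).coeff.support ⊆ (1 : Poly S d).coeff.support ∪ (X S j).coeff.support :=
    Finsupp.support_sub
  have h2 : (1 : Poly S d).coeff.support ⊆ {0} := by
    rw [AddMonoidAlgebra.one_def]
    exact Finsupp.support_single_subset
  have h3 : (X S j).coeff.support ⊆ {Finsupp.single j 1} := by
    rw [X]; exact Finsupp.support_single_subset
  rcases Finset.mem_union.mp (h1 hν) with h | h
  · have : ν = 0 := Finset.mem_singleton.mp (h2 h)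
    simp [this]
  · have : ν = Finsupp.single j 1 := Finset.mem_singleton.mp (h3 h)
    rw [this]
    exact Finsupp.support_single_subset

lemma support_pow_one_sub_X (j : Fin d) (e : ℕ) :
    ∀ ν ∈ ((1 - X S j) ^ e).coeff.support, ν.support ⊆ {j} := by
  classical
  induction e with
  | zero =>
    intro ν hν
    rw [pow_zero] at hν
    have h2 : (1 : Poly S d).coeff.support ⊆ {0} := by
      rw [AddMonoidAlgebra.one_def]
      exact Finsupp.support_single_subset
    have : ν = 0 := Finset.mem_singleton.mp (h2 hν)
    simp [this]
  | succ e ih =>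
    intro ν hν
    rw [pow_succ] at hν
    have := AddMonoidAlgebra.support_coeff_mul_subset _ _ hν
    rw [Finset.mem_add] at this
    obtain ⟨x, hx, y, hy, rfl⟩ := this
    refine subset_trans Finsupp.support_add ?_
    rw [Finset.union_subset_iff]
    exact ⟨ih x hx, support_one_sub_X S j y hy⟩

lemma support_noncommProd (e : Fin d → ℕ) :
    ∀ (B : Finset (Fin d))
      (comm : (↑B : Set (Fin d)).Pairwise (Function.onFun Commute fun j => (1 - X S j) ^ (e j))),
      ∀ ν ∈ (B.noncommProd (fun j => (1 - X S j) ^ (e j)) comm).coeff.support,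
        ν.support ⊆ B.filter (fun j => e j ≠ 0) := by
  classical
  intro B
  induction B using Finset.induction with
  | empty =>
    intro comm ν hν
    rw [Finset.noncommProd_empty] at hν
    have h2 : (1 : Poly S d).coeff.support ⊆ {0} := by
      rw [AddMonoidAlgebra.one_def]
      exact Finsupp.support_single_subset
    have : ν = 0 := Finset.mem_singleton.mp (h2 hν)
    simp [this]
  | @insert a B ha ih =>
    intro comm ν hν
    rw [Finset.noncommProd_insert_of_notMem _ _ _ _ ha] at hν
    have := AddMonoidAlgebra.support_coeff_mul_subset _ _ hν
    rw [Finset.mem_add] at this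
    obtain ⟨x, hx, y, hy, rfl⟩ := this
    refine subset_trans Finsupp.support_add ?_
    rw [Finset.union_subset_iff]
    constructor
    · by_cases hea : e a = 0
      · rw [hea, pow_zero] at hx
        have h2 : (1 : Poly S d).coeff.support ⊆ {0} := by
          rw [AddMonoidAlgebra.one_def]
          exact Finsupp.support_single_subset
        have hx0 : x = 0 := Finset.mem_singleton.mp (h2 hx)
        rw [hx0]
        simp
      refine subset_trans (support_pow_one_sub_X S a (e a) x hx) ?_
      intro z hz
      rw [Finset.mem_singleton] at hz
      rw [hz]
      exact Finset.mem_filter.mpr ⟨Finset.mem_insert_self _ _, hea⟩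
    · refine subset_trans (ih _ y hy) ?_
      intro z hz
      rw [Finset.mem_filter] at hz ⊢
      exact ⟨Finset.mem_insert_of_mem hz.1, hz.2⟩

lemma single_one_mul (μ0 : Fin d →₀ ℕ) (p : Poly S d) :
    AddMonoidAlgebra.single μ0 (1 : S) * p
      = ∑ ν ∈ p.coeff.support, AddMonoidAlgebra.single (μ0 + ν) (p.coeff ν) := by
  conv_lhs => rw [← AddMonoidAlgebra.sum_coeff_single p]
  rw [Finsupp.sum, Finset.mul_sum]
  exact Finset.sum_congr rfl fun ν _ => by
    rw [AddMonoidAlgebra.single_mul_single, one_mul]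

lemma mul_decomp (μ0 : Fin d →₀ ℕ) (p : Poly S d) :
    AddMonoidAlgebra.single μ0 (1 : S) * p
      = AddMonoidAlgebra.single μ0 (ct S p)
        + ∑ ν ∈ p.coeff.support.erase 0, AddMonoidAlgebra.single (μ0 + ν) (p.coeff ν) := by
  classical
  rw [single_one_mul, ct_apply]
  by_cases h0 : (0 : Fin d →₀ ℕ) ∈ p.coeff.support
  · rw [← Finset.add_sum_erase _ _ h0, add_zero]
  · rw [Finsupp.notMem_support_iff.mp h0, Finset.erase_eq_of_notMem h0]
    have hz : AddMonoidAlgebra.single μ0 (0:S) = 0 := AddMonoidAlgebra.single_zero μ0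
    rw [hz, zero_add]

end Algebra

section Relations

variable {m : ℕ} (Δ : Fan n d) (o : MaxOrder Δ m)
  (uu : Fin n → ((Fin n → ℤ) →ₗ[ℤ] ℤ)) (ru : Fin n → Sˣ)
  (hc : ∀ i k, Commute (ru i) (ru k))

lemma mkRcal_mon_zero {F : Finset (Fin d)} (hF : ¬ Δ.isCone F) :
    mkRcal S Δ uu ru hc (mon S F) = 0 := by
  have hrel : relOf S (gensII S Δ uu ru hc) (mon S F) 0 :=
    ⟨Or.inl ⟨F, hF, rfl⟩, rfl⟩
  have := RingQuot.mkRingHom_rel hrel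
  rw [mkRcal]
  rw [this, map_zero]

lemma mkRcal_single_zero {μ : Fin d →₀ ℕ} (h : ¬ Δ.isCone μ.support) :
    mkRcal S Δ uu ru hc (AddMonoidAlgebra.single μ 1) = 0 := by
  have hle : (∑ j ∈ μ.support, Finsupp.single j (1:ℕ)) ≤ μ := by
    rw [Finsupp.le_def]
    intro j
    rw [indicator_apply]
    by_cases hj : j ∈ μ.support
    · simp only [hj, if_true]
      exact Nat.one_le_iff_ne_zero.mpr (Finsupp.mem_support_iff.mp hj)
    · simp [hj]
  have hfac : (AddMonoidAlgebra.single μ (1:S) : Poly S d)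
      = mon S μ.support * AddMonoidAlgebra.single (μ - ∑ j ∈ μ.support, Finsupp.single j 1) 1 := by
    rw [mon, AddMonoidAlgebra.single_mul_single, one_mul]
    congr 1
    exact (add_tsub_cancel_of_le hle).symm
  rw [hfac, map_mul, mkRcal_mon_zero S Δ uu ru hc h, zero_mul]

lemma mkRcal_z (a : Fin n → ℤ) :
    mkRcal S Δ uu ru hc (zPos S Δ (∑ q, a q • uu q))
      = mkRcal S Δ uu ru hc (Cc S (rOf S ru hc a) * zNeg S Δ (∑ q, a q • uu q)) := by
  have hrel : relOf S (gensII S Δ uu ru hc)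
      (zPos S Δ (∑ q, a q • uu q) - Cc S (rOf S ru hc a) * zNeg S Δ (∑ q, a q • uu q)) 0 :=
    ⟨Or.inr ⟨a, rfl⟩, rfl⟩
  have h2 := RingQuot.mkRingHom_rel hrel
  rw [mkRcal]
  have h3 : RingQuot.mkRingHom (relOf S (gensII S Δ uu ru hc))
      (zPos S Δ (∑ q, a q • uu q) - Cc S (rOf S ru hc a) * zNeg S Δ (∑ q, a q • uu q)) = 0 := by
    rw [h2, map_zero]
  rw [map_sub] at h3
  exact sub_eq_zero.mp h3

/-- the dual functional of an edge of a maximal cone -/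
lemma sigma_dual (i : Fin m) {k : Fin d} (hk : k ∈ o.σ i) :
    ∃ u : (Fin n → ℤ) →ₗ[ℤ] ℤ, ∀ j ∈ o.σ i, u (Δ.v j) = if j = k then 1 else 0 := by
  obtain ⟨b, ι, hι, hb⟩ := Δ.unimodular (o.isCone_σ i)
  exact ⟨b.coord (ι k), fun j hj => coord_v b ι hι hb hj hk⟩

/-- every integral linear functional is an integral combination of the `uu q` -/
lemma exists_rep (hnd : n ≤ d) (hfc : Δ.isCone (firstn hnd))
    (huu : ∀ i j : Fin n, uu i (Δ.v (Fin.castLE hnd j)) = if i = j then 1 else 0)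
    (u : (Fin n → ℤ) →ₗ[ℤ] ℤ) :
    u = ∑ q, (u (Δ.v (Fin.castLE hnd q))) • uu q := by
  obtain ⟨b', ι', hι', hb'⟩ := Δ.unimodular hfc
  have hmem : ∀ q : Fin n, (Fin.castLE hnd q) ∈ firstn hnd := fun q => by
    rw [firstn, Finset.mem_map]
    exact ⟨q, Finset.mem_univ q, rfl⟩
  have hinj : Function.Injective (fun q : Fin n => ι' (Fin.castLE hnd q)) := by
    intro p q hpq
    have := hι' (hmem p) (hmem q) hpq
    exact Fin.castLE_injective hnd this
  have hbij : Function.Bijective (fun q : Fin n => ι' (Fin.castLE hnd q)) :=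
    (Finite.injective_iff_bijective).mp hinj
  set E := Equiv.ofBijective _ hbij with hE
  apply (b'.reindex E.symm).ext
  intro q
  have hq : (b'.reindex E.symm) q = Δ.v (Fin.castLE hnd q) := by
    rw [Module.Basis.reindex_apply, Equiv.symm_symm]
    show b' (ι' (Fin.castLE hnd q)) = _
    exact hb' _ (hmem q)
  rw [hq, LinearMap.sum_apply, Finset.sum_eq_single q]
  · rw [LinearMap.smul_apply, huu q q, if_pos rfl, smul_eq_mul, mul_one]
  · intro p _ hpq
    rw [LinearMap.smul_apply, huu p q, if_neg hpq, smul_eq_mul, mul_zero]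
  · intro h; exact absurd (Finset.mem_univ q) h

/-- membership in the left `S`-span of the `x(τ j)`, `j ≥ i` -/
def Good (i : Fin m) (y : RcalRing S Δ uu ru hc) : Prop :=
  ∃ c : Fin m → S, (∀ j, j < i → c j = 0) ∧
    y = ∑ j, mkRcal S Δ uu ru hc (Cc S (c j)) * mkRcal S Δ uu ru hc (mon S (o.tau j))

variable {S Δ o uu ru hc}

lemma good_zero (i : Fin m) : Good S Δ o uu ru hc i 0 :=
  ⟨0, fun _ _ => rfl, by simp [Cc_zero]⟩

lemma good_add {i : Fin m} {y z : RcalRing S Δ uu ru hc}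
    (hy : Good S Δ o uu ru hc i y) (hz : Good S Δ o uu ru hc i z) :
    Good S Δ o uu ru hc i (y + z) := by
  obtain ⟨c1, h1, rfl⟩ := hy
  obtain ⟨c2, h2, rfl⟩ := hz
  refine ⟨c1 + c2, fun j hj => by simp [h1 j hj, h2 j hj], ?_⟩
  rw [← Finset.sum_add_distrib]
  refine Finset.sum_congr rfl fun j _ => ?_
  rw [← add_mul]
  congr 1
  rw [Pi.add_apply, ← map_add]
  congr 1
  exact (AddMonoidAlgebra.single_add 0 (c1 j) (c2 j)).symm

lemma good_smul {i : Fin m} (s : S) {y : RcalRing S Δ uu ru hc}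
    (hy : Good S Δ o uu ru hc i y) :
    Good S Δ o uu ru hc i (mkRcal S Δ uu ru hc (Cc S s) * y) := by
  obtain ⟨c, h1, rfl⟩ := hy
  refine ⟨fun j => s * c j, fun j hj => by show s * c j = 0; rw [h1 j hj, mul_zero], ?_⟩
  rw [Finset.mul_sum]
  refine Finset.sum_congr rfl fun j _ => ?_
  rw [← mul_assoc, ← map_mul, ← Cc_mul]

lemma good_neg {i : Fin m} {y : RcalRing S Δ uu ru hc}
    (hy : Good S Δ o uu ru hc i y) : Good S Δ o uu ru hc i (-y) := by
  obtain ⟨c, h1, rfl⟩ := hy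
  refine ⟨fun j => -(c j), fun j hj => by show -(c j) = 0; rw [h1 j hj, neg_zero], ?_⟩
  rw [← Finset.sum_neg_distrib]
  refine Finset.sum_congr rfl fun j _ => ?_
  show _ = mkRcal S Δ uu ru hc (Cc S (-(c j))) * _
  rw [Cc_neg, map_neg]
  exact (neg_mul (mkRcal S Δ uu ru hc (Cc S (c j))) (mkRcal S Δ uu ru hc (mon S (o.tau j)))).symm

lemma good_sub {i : Fin m} {y z : RcalRing S Δ uu ru hc}
    (hy : Good S Δ o uu ru hc i y) (hz : Good S Δ o uu ru hc i z) :
    Good S Δ o uu ru hc i (y - z) := by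
  rw [sub_eq_add_neg]
  exact good_add hy (good_neg hz)

lemma good_mono {i i' : Fin m} (h : i ≤ i') {y : RcalRing S Δ uu ru hc}
    (hy : Good S Δ o uu ru hc i' y) : Good S Δ o uu ru hc i y := by
  obtain ⟨c, h1, rfl⟩ := hy
  exact ⟨c, fun j hj => h1 j (lt_of_lt_of_le hj h), rfl⟩

lemma good_sum {i : Fin m} {α : Type*} (T : Finset α) (f : α → RcalRing S Δ uu ru hc)
    (hf : ∀ a ∈ T, Good S Δ o uu ru hc i (f a)) :
    Good S Δ o uu ru hc i (∑ a ∈ T, f a) := by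
  classical
  induction T using Finset.induction with
  | empty => simpa using good_zero i
  | @insert a T ha ih =>
    rw [Finset.sum_insert ha]
    exact good_add (hf a (Finset.mem_insert_self a T))
      (ih fun b hb => hf b (Finset.mem_insert_of_mem hb))

lemma good_tau (i : Fin m) : Good S Δ o uu ru hc i (mkRcal S Δ uu ru hc (mon S (o.tau i))) := by
  refine ⟨fun j => if j = i then 1 else 0, fun j hj => if_neg (ne_of_lt hj), ?_⟩
  rw [Finset.sum_eq_single i]
  · simp [Cc_one]
  · intro j _ hj
    simp [hj, Cc_zero]
  · intro h; exact absurd (Finset.mem_univ i) h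

end Relations

section Main

variable {m : ℕ} {Δ : Fan n d} {o : MaxOrder Δ m}
  {uu : Fin n → ((Fin n → ℤ) →ₗ[ℤ] ℤ)} {ru : Fin n → Sˣ}
  {hc : ∀ i k, Commute (ru i) (ru k)}

lemma X_commute (j : Fin d) (p : Poly S d) : Commute (X S j) p := by
  have hp : p = ∑ ν ∈ p.coeff.support, AddMonoidAlgebra.single ν (p.coeff ν) := by
    conv_lhs => rw [← AddMonoidAlgebra.sum_coeff_single p]
    rfl
  rw [hp]
  exact Commute.sum_right _ _ _ fun ν _ =>
    AddMonoidAlgebra.single_commute_single (AddCommute.all _ _) (Commute.one_left _)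

lemma main_induction (hnd : n ≤ d) (hfc : Δ.isCone (firstn hnd))
    (huu : ∀ i j : Fin n, uu i (Δ.v (Fin.castLE hnd j)) = if i = j then 1 else 0)
    (hstar : o.Star) :
    ∀ t s : ℕ, ∀ (i : Fin m) (μ : Fin d →₀ ℕ), m - 1 - (i : ℕ) ≤ t → (∑ j, μ j) ≤ s →
      Δ.isCone μ.support → o.tau i ⊆ μ.support → μ.support ⊆ o.σ i →
      Good S Δ o uu ru hc i (mkRcal S Δ uu ru hc (AddMonoidAlgebra.single μ 1)) := by
  intro t
  induction t using Nat.strong_induction_on with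
  | _ t IHt =>
  intro s
  induction s using Nat.strong_induction_on with
  | _ s IHs =>
  intro i μ hti hsi hcone hτ hσ
  -- helper handling monomials supported on bigger cones
  have newmon : ∀ (μ0 ν : Fin d →₀ ℕ), o.tau i ⊆ μ0.support → μ0.support ⊆ o.σ i →
      ν ≠ 0 → (∀ j ∈ ν.support, j ∉ o.σ i) →
      Good S Δ o uu ru hc i (mkRcal S Δ uu ru hc (AddMonoidAlgebra.single (μ0 + ν) 1)) := by
    intro μ0 ν hτ0 hσ0 hν0 hνout
    by_cases hcone2 : Δ.isCone (μ0 + ν).support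
    · have hdisj : Disjoint μ0.support ν.support := by
        rw [Finset.disjoint_left]
        intro p hp hq
        exact hνout p hq (hσ0 hp)
      have hsupp : (μ0 + ν).support = μ0.support ∪ ν.support := Finsupp.support_add_eq hdisj
      obtain ⟨i', hi'1, hi'2⟩ := interval o hcone2
      have hτi' : o.tau i ⊆ (μ0 + ν).support := by
        rw [hsupp]; exact fun p hp => Finset.mem_union_left _ (hτ0 hp)
      have hii : i ≤ i' := hstar i i' (fun p hp => hi'2 (hτi' hp))
      have hne : i ≠ i' := by
        intro he
        obtain ⟨j0, hj0⟩ := Finsupp.support_nonempty_iff.mpr hν0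
        apply hνout j0 hj0
        have : j0 ∈ (μ0 + ν).support := by
          rw [hsupp]; exact Finset.mem_union_right _ hj0
        rw [he]
        exact hi'2 this
      have hlt : (i : ℕ) < (i' : ℕ) := by
        have := lt_of_le_of_ne hii hne
        exact this
      have hi'm : (i' : ℕ) < m := i'.isLt
      have hbound : m - 1 - (i' : ℕ) < t := by omega
      exact good_mono hii (IHt _ hbound _ i' (μ0 + ν) le_rfl le_rfl hcone2 hi'1 hi'2)
    · rw [mkRcal_single_zero S Δ uu ru hc hcone2]
      exact good_zero i
  by_cases hbase : ∀ k ∈ μ.support, k ∈ o.tau i ∧ μ k = 1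
  · have hμ : μ = ∑ j ∈ o.tau i, Finsupp.single j 1 := by
      ext j
      rw [indicator_apply]
      by_cases hj : j ∈ μ.support
      · obtain ⟨h1, h2⟩ := hbase j hj
        rw [if_pos h1, h2]
      · have hj' : j ∉ o.tau i := fun h => hj (hτ h)
        rw [if_neg hj', Finsupp.notMem_support_iff.mp hj]
    rw [hμ]
    exact good_tau i
  · push_neg at hbase
    obtain ⟨k, hkμ, hk2⟩ := hbase
    have hkσ : k ∈ o.σ i := hσ hkμ
    have hμk : 1 ≤ μ k := Nat.one_le_iff_ne_zero.mpr (Finsupp.mem_support_iff.mp hkμ)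
    have hle1 : Finsupp.single k 1 ≤ μ := by
      rw [Finsupp.le_def]
      intro j
      rw [Finsupp.single_apply]
      split_ifs with h
      · subst h; exact hμk
      · exact Nat.zero_le _
    set μ' : Fin d →₀ ℕ := μ - Finsupp.single k 1 with hμ'def
    have hsplit : μ' + Finsupp.single k 1 = μ := tsub_add_cancel_of_le hle1
    have hμ'le : ∀ j, μ' j ≤ μ j := fun j => by
      rw [hμ'def, Finsupp.tsub_apply]; exact Nat.sub_le _ _
    have hμ'app : ∀ j, j ≠ k → μ' j = μ j := fun j hj => by
      rw [hμ'def, Finsupp.tsub_apply, Finsupp.single_apply, if_neg (fun h => hj h.symm),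
        Nat.sub_zero]
    have hμ'k : μ' k = μ k - 1 := by
      rw [hμ'def, Finsupp.tsub_apply, Finsupp.single_apply, if_pos rfl]
    have hsub : μ'.support ⊆ μ.support := fun j hj => by
      rw [Finsupp.mem_support_iff] at hj ⊢
      have := hμ'le j
      omega
    have hτ' : o.tau i ⊆ μ'.support := by
      intro j hj
      rw [Finsupp.mem_support_iff]
      by_cases hjk : j = k
      · subst hjk
        have h1 : μ j ≠ 1 := hk2 hj
        rw [hμ'k]
        omega
      · rw [hμ'app j hjk]
        exact Finsupp.mem_support_iff.mp (hτ hj)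
    have hcone' : Δ.isCone μ'.support := Δ.isCone_mono hcone hsub
    have hσ' : μ'.support ⊆ o.σ i := subset_trans hsub hσ
    have hdeg : ∑ j, μ' j < ∑ j, μ j := by
      refine Finset.sum_lt_sum (fun j _ => hμ'le j) ⟨k, Finset.mem_univ k, ?_⟩
      rw [hμ'k]; omega
    -- the dual functional and its coefficients
    obtain ⟨u, hu⟩ := sigma_dual Δ o i hkσ
    obtain ⟨a, hrep⟩ : ∃ a : Fin n → ℤ, u = ∑ q, a q • uu q :=
      ⟨_, exists_rep Δ uu hnd hfc huu u⟩
    have hz : mkRcal S Δ uu ru hc (zPos S Δ u)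
        = mkRcal S Δ uu ru hc (Cc S (rOf S ru hc a) * zNeg S Δ u) := by
      rw [hrep]; exact mkRcal_z S Δ uu ru hc a
    -- split off the factor at k from zPos
    set Pk : Poly S d := (Finset.univ.erase k).noncommProd
        (fun j => (1 - X S j) ^ (u (Δ.v j)).toNat)
        (fun j _ k' _ _ => commute_one_sub_X_pow S j k' _ _) with hPkdef
    have hepk : (u (Δ.v k)).toNat = 1 := by rw [hu k hkσ, if_pos rfl]; rfl
    have hzfact : zPos S Δ u = Pk * (1 - X S k) := by
      have h := Finset.noncommProd_erase_mul Finset.univ (Finset.mem_univ k)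
        (fun j => (1 - X S j) ^ (u (Δ.v j)).toNat)
        (fun j _ k' _ _ => commute_one_sub_X_pow S j k' _ _)
      rw [zPos, ← h, hepk, pow_one]
    have hXk : AddMonoidAlgebra.single μ' (1:S) * X S k = AddMonoidAlgebra.single μ 1 := by
      rw [X, AddMonoidAlgebra.single_mul_single, mul_one, hsplit]
    have key1 : AddMonoidAlgebra.single μ' (1:S) * zPos S Δ u
        = AddMonoidAlgebra.single μ' 1 * Pk - AddMonoidAlgebra.single μ 1 * Pk := by
      rw [hzfact, ← mul_assoc, mul_sub, mul_one]
      congr 1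
      rw [mul_assoc, ← (X_commute S k Pk).eq, ← mul_assoc, hXk]
    have key2 : AddMonoidAlgebra.single μ' (1:S) * (Cc S (rOf S ru hc a) * zNeg S Δ u)
        = Cc S (rOf S ru hc a) * (AddMonoidAlgebra.single μ' 1 * zNeg S Δ u) := by
      rw [← mul_assoc, single_comm_Cc, mul_assoc]
    have hctPk : ct S Pk = 1 := by
      rw [hPkdef]
      exact ct_noncommProd S _ (fun j => (u (Δ.v j)).toNat) _
    have hctzN : ct S (zNeg S Δ u) = 1 := by
      rw [zNeg]
      exact ct_noncommProd S _ (fun j => (-(u (Δ.v j))).toNat) _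
    have dec1 := mul_decomp S μ' Pk
    have dec2 := mul_decomp S μ Pk
    have dec3 := mul_decomp S μ' (zNeg S Δ u)
    rw [hctPk] at dec1 dec2
    rw [hctzN] at dec3
    -- the master identity in the quotient ring
    have hzz : mkRcal S Δ uu ru hc (AddMonoidAlgebra.single μ' 1 * zPos S Δ u)
        = mkRcal S Δ uu ru hc
            (AddMonoidAlgebra.single μ' 1 * (Cc S (rOf S ru hc a) * zNeg S Δ u)) := by
      rw [map_mul, map_mul, hz]
    rw [key1, key2, map_sub, dec1, dec2, dec3, map_mul] at hzz
    rw [map_add, map_add, map_add] at hzz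
    have hMu : mkRcal S Δ uu ru hc (AddMonoidAlgebra.single μ 1)
        = (mkRcal S Δ uu ru hc (AddMonoidAlgebra.single μ' 1)
            + mkRcal S Δ uu ru hc (∑ ν ∈ Pk.coeff.support.erase 0,
                AddMonoidAlgebra.single (μ' + ν) (Pk.coeff ν)))
          - mkRcal S Δ uu ru hc (∑ ν ∈ Pk.coeff.support.erase 0,
                AddMonoidAlgebra.single (μ + ν) (Pk.coeff ν))
          - mkRcal S Δ uu ru hc (Cc S (rOf S ru hc a))
              * (mkRcal S Δ uu ru hc (AddMonoidAlgebra.single μ' 1)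
                + mkRcal S Δ uu ru hc (∑ ν ∈ (zNeg S Δ u).coeff.support.erase 0,
                    AddMonoidAlgebra.single (μ' + ν) ((zNeg S Δ u).coeff ν))) := by
      have h2 := sub_eq_iff_eq_add.mp hzz
      rw [h2]
      abel
    rw [hMu]
    -- the small monomial is handled by the inner induction
    have gA1 : Good S Δ o uu ru hc i
        (mkRcal S Δ uu ru hc (AddMonoidAlgebra.single μ' 1)) :=
      IHs (∑ j, μ' j) (lt_of_lt_of_le hdeg hsi) i μ' hti le_rfl hcone' hτ' hσ'
    -- support facts for the correction terms
    have houtP : ∀ ν ∈ Pk.coeff.support.erase 0, ∀ j ∈ ν.support, j ∉ o.σ i := by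
      intro ν hν j hj
      have hνs : ν ∈ Pk.coeff.support := (Finset.mem_erase.mp hν).2
      have hbd := support_noncommProd S (fun j => (u (Δ.v j)).toNat)
        (Finset.univ.erase k) _ ν hνs hj
      rw [Finset.mem_filter, Finset.mem_erase] at hbd
      obtain ⟨⟨hjk, _⟩, hje⟩ := hbd
      intro hjσ
      apply hje
      show (u (Δ.v j)).toNat = 0
      rw [hu j hjσ, if_neg hjk]
      rfl
    have houtN : ∀ ν ∈ (zNeg S Δ u).coeff.support.erase 0, ∀ j ∈ ν.support, j ∉ o.σ i := by
      intro ν hν j hj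
      have hνs : ν ∈ (zNeg S Δ u).coeff.support := (Finset.mem_erase.mp hν).2
      have hbd := support_noncommProd S (fun j => (-(u (Δ.v j))).toNat)
        Finset.univ _ ν hνs hj
      rw [Finset.mem_filter] at hbd
      obtain ⟨_, hje⟩ := hbd
      intro hjσ
      apply hje
      show (-(u (Δ.v j))).toNat = 0
      rw [hu j hjσ]
      split_ifs <;> rfl
    have gsum : ∀ (μ0 : Fin d →₀ ℕ) (p : Poly S d), o.tau i ⊆ μ0.support →
        μ0.support ⊆ o.σ i →
        (∀ ν ∈ p.coeff.support.erase 0, ∀ j ∈ ν.support, j ∉ o.σ i) →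
        Good S Δ o uu ru hc i (mkRcal S Δ uu ru hc
          (∑ ν ∈ p.coeff.support.erase 0, AddMonoidAlgebra.single (μ0 + ν) (p.coeff ν))) := by
      intro μ0 p hτ0 hσ0 hout
      rw [map_sum]
      refine good_sum _ _ fun ν hν => ?_
      have hν0 : ν ≠ 0 := (Finset.mem_erase.mp hν).1
      rw [single_eq_Cc_mul, map_mul]
      exact good_smul _ (newmon μ0 ν hτ0 hσ0 hν0 (hout ν hν))
    exact good_sub (good_sub (good_add gA1 (gsum μ' Pk hτ' hσ' houtP))
        (gsum μ Pk hτ hσ houtP))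
      (good_smul _ (good_add gA1 (gsum μ' (zNeg S Δ u) hτ' hσ' houtN)))

end Main

theorem statement12 {n d m : ℕ} (hn : 1 ≤ n) (hnd : n ≤ d) (hm : 1 ≤ m)
    (Δ : Fan n d) (o : MaxOrder Δ m) (hstar : o.Star)
    (hlast : o.σ ⟨m - 1, by omega⟩ = firstn hnd)
    (S : Type*) [Ring S] (ru : Fin n → Sˣ)
    (hcen : ∀ i, (ru i : S) ∈ Subring.center S)
    (uu : Fin n → ((Fin n → ℤ) →ₗ[ℤ] ℤ))
    (huu : ∀ i j : Fin n, uu i (Δ.v (Fin.castLE hnd j)) = if i = j then 1 else 0)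
    (γ : Finset (Fin d)) (hγ : Δ.isCone γ)
    (i : Fin m) (hi1 : o.tau i ⊆ γ) (hi2 : γ ⊆ o.σ i) :
    ∃ c : Fin m → S, (∀ j, j < i → c j = 0) ∧
      mkRcal S Δ uu ru (central_commute S ru hcen) (mon S γ) =
        ∑ j, mkRcal S Δ uu ru (central_commute S ru hcen) (Cc S (c j)) *
          mkRcal S Δ uu ru (central_commute S ru hcen) (mon S (o.tau j)) := by
  have hfc : Δ.isCone (firstn hnd) := by rw [← hlast]; exact o.isCone_σ _
  have h := main_induction (S := S) (hc := central_commute S ru hcen) hnd hfc huu hstar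
    (m - 1 - (i : ℕ)) (∑ j, (∑ k ∈ γ, Finsupp.single k (1:ℕ)) j) i
    (∑ k ∈ γ, Finsupp.single k 1)
    le_rfl le_rfl (by rw [indicator_support]; exact hγ)
    (by rw [indicator_support]; exact hi1)
    (by rw [indicator_support]; exact hi2)
  exact h

end SU
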